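/- The function f defined by f(ε) = 16π(1/ε + (1/(2ε²))·log((1−ε)/(1+ε)) + 4ε/(3(1−ε²))) is strictly increasing on the interval (0,1), takes only positive values there, and its range is exactly (0,∞); that is, f(ε) → 0 as ε → 0⁺, f(ε) → ∞ as ε → 1⁻, and f is a strictly increasing bijection from (0,1) onto (0,∞). -/

import Mathlib

/-!
Expanding `log ((1 - ε) / (1 + ε)) = -2 ∑ ε ^ (2k+1) / (2k+1)`, the singular terms cancel and
`f(ε) = 16π ∑ (4/3 - 1/(2k+3)) ε ^ (2k+1)` for `|ε| < 1`: an odd power series whose coefficients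
lie in `[1, 4/3]`. Hence `f` is strictly increasing, and `16π ε/(1-ε²) ≤ f(ε) ≤ (64π/3) ε/(1-ε²)`
on `[0, 1)`, which gives positivity and both limits; the range follows by the intermediate value
theorem.
-/

noncomputable section

open Filter

/-- The function relating the net force `|b|` of the Landau solution to its parameter `ε`:
`f(ε) = 16π (1/ε + (1/(2ε²)) log((1−ε)/(1+ε)) + 4ε/(3(1−ε²)))`. -/
def forceF (ε : ℝ) : ℝ :=
  16 * Real.pi * (1 / ε + (1 / (2 * ε ^ 2)) * Real.log ((1 - ε) / (1 + ε))
    + 4 * ε / (3 * (1 - ε ^ 2)))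

open Real Set Topology

theorem hasSum_pow_two_mul_add_one_of_abs_lt_one {x : ℝ} (hx : |x| < 1) :
    HasSum (fun k : ℕ => x ^ (2 * k + 1)) (x / (1 - x ^ 2)) := by
  have hx2 : |x ^ 2| < 1 := by rw [abs_pow]; exact pow_lt_one₀ (abs_nonneg x) hx two_ne_zero
  rw [show (fun k : ℕ => x ^ (2 * k + 1)) = fun k => x * (x ^ 2) ^ k by ext k; ring,
    div_eq_mul_inv]
  exact (hasSum_geometric_of_abs_lt_one hx2).mul_left x

def forceFCoeff (k : ℕ) : ℝ := 4 / 3 - 1 / (2 * k + 3)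

theorem forceFCoeff_mem_Icc (k : ℕ) : forceFCoeff k ∈ Icc 1 (4 / 3) := by
  have h3 : 1 / (2 * k + 3 : ℝ) ≤ 1 / 3 :=
    one_div_le_one_div_of_le (by norm_num) (by linarith [k.cast_nonneg (α := ℝ)])
  have h0 : 0 ≤ 1 / (2 * k + 3 : ℝ) := by positivity
  constructor <;> unfold forceFCoeff <;> linarith

theorem hasSum_forceF {x : ℝ} (hx : |x| < 1) :
    HasSum (fun k : ℕ => 16 * π * forceFCoeff k * x ^ (2 * k + 1)) (forceF x) := by
  -- at `x = 0` both sides vanish, `forceF 0 = 0` coming from `1 / 0 = 0`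
  rcases eq_or_ne x 0 with rfl | hx0
  · simp [forceF]
  obtain ⟨hx₁, hx₂⟩ := abs_lt.mp hx
  have hlog := (hasSum_nat_add_iff' 1).mpr (Real.hasSum_log_sub_log_of_abs_lt_one hx)
  have hsum := ((hlog.mul_left (-1 / (2 * x ^ 2))).add
    ((hasSum_pow_two_mul_add_one_of_abs_lt_one hx).mul_left (4 / 3))).mul_left (16 * π)
  convert hsum using 1
  · rfl
  · ext k
    push_cast [forceFCoeff]
    field_simp
    ring
  · have h1 : 1 - x ≠ 0 := by linarith
    have h2 : 1 + x ≠ 0 := by linarith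
    have h3 : 1 - x ^ 2 ≠ 0 := by nlinarith
    rw [forceF, Real.log_div h1 h2, Finset.sum_range_one]
    field_simp
    ring

theorem strictMonoOn_forceF : StrictMonoOn forceF (Ioo (-1) 1) := by
  intro x hx y hy hxy
  have hcoeff (k : ℕ) : 0 < 16 * π * forceFCoeff k :=
    mul_pos (by positivity) (one_pos.trans_le (forceFCoeff_mem_Icc k).1)
  have hpow (k : ℕ) : x ^ (2 * k + 1) < y ^ (2 * k + 1) :=
    (odd_two_mul_add_one k).strictMono_pow hxy
  exact hasSum_lt (i := 0) (fun k => mul_le_mul_of_nonneg_left (hpow k).le (hcoeff k).le)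
    (mul_lt_mul_of_pos_left (hpow 0) (hcoeff 0))
    (hasSum_forceF (abs_lt.mpr hx)) (hasSum_forceF (abs_lt.mpr hy))

theorem forceF_mem_Icc {x : ℝ} (hx₀ : 0 ≤ x) (hx₁ : x < 1) :
    forceF x ∈ Icc (16 * π * (x / (1 - x ^ 2))) (64 * π / 3 * (x / (1 - x ^ 2))) := by
  have hx : |x| < 1 := abs_lt.mpr ⟨by linarith, hx₁⟩
  have hgeom := hasSum_pow_two_mul_add_one_of_abs_lt_one hx
  have hpow (k : ℕ) : 0 ≤ x ^ (2 * k + 1) := pow_nonneg hx₀ _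
  have hcoeff (k : ℕ) : 16 * π * forceFCoeff k ∈ Icc (16 * π) (64 * π / 3) := by
    obtain ⟨hlo, hhi⟩ := forceFCoeff_mem_Icc k
    have := pi_pos
    constructor <;> nlinarith
  exact ⟨hasSum_le (fun k => mul_le_mul_of_nonneg_right (hcoeff k).1 (hpow k))
      (hgeom.mul_left _) (hasSum_forceF hx),
    hasSum_le (fun k => mul_le_mul_of_nonneg_right (hcoeff k).2 (hpow k))
      (hasSum_forceF hx) (hgeom.mul_left _)⟩

theorem forceF_pos {x : ℝ} (hx : x ∈ Ioo 0 1) : 0 < forceF x := by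
  obtain ⟨hx₀, hx₁⟩ := hx
  have : 0 < 1 - x ^ 2 := by nlinarith
  exact lt_of_lt_of_le (by positivity) (forceF_mem_Icc hx₀.le hx₁).1

theorem continuousAt_forceF {x : ℝ} (hx₀ : x ≠ 0) (hx : |x| < 1) : ContinuousAt forceF x := by
  obtain ⟨hx₁, hx₂⟩ := abs_lt.mp hx
  have h1 : 1 - x ^ 2 ≠ 0 := by nlinarith
  have h2 : 1 + x ≠ 0 := by linarith
  have h3 : (1 - x) / (1 + x) ≠ 0 := div_ne_zero (by linarith) h2
  unfold forceF
  fun_prop (disch := first | assumption | positivity)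

theorem tendsto_div_one_sub_sq_nhdsLT_one :
    Tendsto (fun x : ℝ => x / (1 - x ^ 2)) (𝓝[<] 1) atTop := by
  have hden : Tendsto (fun x : ℝ => 1 - x ^ 2) (𝓝[<] 1) (𝓝[>] 0) := by
    refine tendsto_nhdsWithin_of_tendsto_nhds_of_eventually_within _ ?_ ?_
    · exact ((continuous_const.sub (continuous_pow 2)).tendsto' (1 : ℝ) 0 (by norm_num)).mono_left
        nhdsWithin_le_nhds
    · filter_upwards [Ioo_mem_nhdsLT (show (-1 : ℝ) < 1 by norm_num)] with x hx
      exact show 0 < 1 - x ^ 2 by nlinarith [hx.1, hx.2]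
  exact (tendsto_nhdsWithin_of_tendsto_nhds (tendsto_id (x := 𝓝 1))).pos_mul_atTop one_pos
    hden.inv_tendsto_nhdsGT_zero

theorem tendsto_forceF_nhdsGT_zero : Tendsto forceF (𝓝[>] 0) (𝓝 0) := by
  have hmajorant : Tendsto (fun x : ℝ => 64 * π / 3 * (x / (1 - x ^ 2))) (𝓝[>] 0) (𝓝 0) := by
    have : ContinuousAt (fun x : ℝ => 64 * π / 3 * (x / (1 - x ^ 2))) 0 := by
      fun_prop (disch := norm_num)
    simpa using this.tendsto.mono_left nhdsWithin_le_nhds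
  refine tendsto_of_tendsto_of_tendsto_of_le_of_le' tendsto_const_nhds hmajorant ?_ ?_ <;>
    filter_upwards [Ioo_mem_nhdsGT (show (0 : ℝ) < 1 by norm_num)] with x hx
  · exact (forceF_pos hx).le
  · exact (forceF_mem_Icc hx.1.le hx.2).2

theorem tendsto_forceF_nhdsLT_one : Tendsto forceF (𝓝[<] 1) atTop := by
  refine tendsto_atTop_mono' _ ?_ (tendsto_div_one_sub_sq_nhdsLT_one.const_mul_atTop
    (by positivity : (0 : ℝ) < 16 * π))
  filter_upwards [Ioo_mem_nhdsLT (show (0 : ℝ) < 1 by norm_num)] with x hx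
  exact (forceF_mem_Icc hx.1.le hx.2).1

theorem forceF_image_Ioo : forceF '' Ioo 0 1 = Ioi 0 := by
  refine (image_subset_iff.mpr fun x hx => forceF_pos hx).antisymm ?_
  have hcont : ContinuousOn forceF (Ioo 0 1) := fun x hx =>
    (continuousAt_forceF hx.1.ne' (abs_lt.mpr ⟨by linarith [hx.1], hx.2⟩)).continuousWithinAt
  exact isPreconnected_Ioo.intermediate_value_Ioi
    (le_principal_iff.mpr (Ioo_mem_nhdsGT one_pos)) (le_principal_iff.mpr (Ioo_mem_nhdsLT one_pos))
    hcont tendsto_forceF_nhdsGT_zero tendsto_forceF_nhdsLT_one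

/-- `f` is strictly increasing on `(0,1)`, positive there, with range exactly `(0,∞)`:
`f(ε) → 0` as `ε → 0⁺`, `f(ε) → ∞` as `ε → 1⁻`, and `f` is a strictly increasing
bijection from `(0,1)` onto `(0,∞)`. -/
theorem forceF_strictMono_bijective :
    StrictMonoOn forceF (Set.Ioo (0 : ℝ) 1) ∧
    (∀ ε ∈ Set.Ioo (0 : ℝ) 1, 0 < forceF ε) ∧
    forceF '' Set.Ioo (0 : ℝ) 1 = Set.Ioi (0 : ℝ) ∧
    Tendsto forceF (nhdsWithin 0 (Set.Ioi (0 : ℝ))) (nhds 0) ∧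
    Tendsto forceF (nhdsWithin 1 (Set.Iio (1 : ℝ))) atTop ∧
    Set.BijOn forceF (Set.Ioo (0 : ℝ) 1) (Set.Ioi (0 : ℝ)) := by
  have hmono := strictMonoOn_forceF.mono (Ioo_subset_Ioo_left (by norm_num : (-1 : ℝ) ≤ 0))
  exact ⟨hmono, fun ε => forceF_pos, forceF_image_Ioo, tendsto_forceF_nhdsGT_zero,
    tendsto_forceF_nhdsLT_one, fun ε => forceF_pos, hmono.injOn, forceF_image_Ioo.ge⟩
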